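/- arXiv:2009.02082 — 3 statements merged into one kernel-verified Lean document; each statement's English description precedes it below -/
import Mathlib

section
/- Let f : (0,1) → ℝ be r times differentiable with |f^(r)(x)| ≤ 2/x for all x ∈ (0,1), where r ≥ 2. Define g(x) = f(x²). Then the r-th derivative of g satisfies |g^(r)(x)| ≤ C(r)·(1 + sup_{|α| ≤ r-1} ‖f^(α)‖) for some constant C(r) depending only on r, provided additionally that the derivatives f^(j) for j < r are bounded by 1 on (0,1). -/
/-!
Differentiating `n` times, `(d/dx)ⁿ f(x²) = ∑_{k ≤ n} Pₙₖ(x) f⁽ᵏ⁾(x²)` with polynomials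
`Pₙₖ = sqSubstPoly n k` (the chain rule gives `Pₙ₊₁,ₖ = Pₙₖ' + 2X Pₙ,ₖ₋₁`), and the leading one is
`Pₙₙ = (2X)ⁿ`. For `n = r` the terms with `k < r` are bounded by `B` times the maximum of
`∑ₖ |Pᵣₖ|` on `[0,1]`, while the top term is at most `(2x)ʳ · 2 / x² = 2ʳ⁺¹ xʳ⁻² ≤ 2ʳ⁺¹`
because `r ≥ 2`.
-/

open Set Polynomial Finset

noncomputable def sqSubstPoly : ℕ → ℕ → ℝ[X]
  | 0, 0 => 1
  | 0, _ + 1 => 0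
  | n + 1, 0 => derivative (sqSubstPoly n 0)
  | n + 1, k + 1 => derivative (sqSubstPoly n (k + 1)) + C 2 * X * sqSubstPoly n k

lemma sqSubstPoly_eq_zero_of_lt {n k : ℕ} (h : n < k) : sqSubstPoly n k = 0 := by
  induction n generalizing k with
  | zero => obtain ⟨k, rfl⟩ := Nat.exists_eq_succ_of_ne_zero h.ne'; rfl
  | succ n ih =>
    obtain ⟨k, rfl⟩ := Nat.exists_eq_succ_of_ne_zero (Nat.ne_zero_of_lt h)
    rw [sqSubstPoly, ih (by omega), ih (by omega), derivative_zero, mul_zero, add_zero]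

lemma sqSubstPoly_self (n : ℕ) : sqSubstPoly n n = (C 2 * X) ^ n := by
  induction n with
  | zero => rfl
  | succ n ih =>
    rw [sqSubstPoly, sqSubstPoly_eq_zero_of_lt n.lt_succ_self, ih, derivative_zero, zero_add,
      pow_succ, mul_comm]

lemma sum_range_succ_sqSubstPoly (n : ℕ) (x : ℝ) (c : ℕ → ℝ) :
    ∑ k ∈ range (n + 2), (sqSubstPoly (n + 1) k).eval x * c k =
      ∑ k ∈ range (n + 1), ((derivative (sqSubstPoly n k)).eval x * c k +
        (sqSubstPoly n k).eval x * (c (k + 1) * (2 * x))) := by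
  have hderiv : ∑ k ∈ range (n + 2), (derivative (sqSubstPoly n k)).eval x * c k =
      ∑ k ∈ range (n + 1), (derivative (sqSubstPoly n k)).eval x * c k := by
    rw [sum_range_succ, sqSubstPoly_eq_zero_of_lt n.lt_succ_self, derivative_zero, eval_zero,
      zero_mul, add_zero]
  rw [sum_add_distrib, ← hderiv, sum_range_succ' _ (n + 1), sum_range_succ' _ (n + 1)]
  simp only [sqSubstPoly, eval_add, eval_mul, eval_C, eval_X, add_mul, sum_add_distrib]
  rw [add_right_comm]
  exact congrArg _ (sum_congr rfl fun k _ => by ring)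

lemma mapsTo_sq_Ioo_zero_one : MapsTo (fun x : ℝ => x ^ 2) (Ioo 0 1) (Ioo 0 1) :=
  fun _ ⟨h0, h1⟩ => ⟨by positivity, by nlinarith⟩

section SquareSubstitution

variable {s t : Set ℝ} {f : ℝ → ℝ} {n : ℕ}

lemma hasDerivWithinAt_iteratedDerivWithin_comp_sq (ht : UniqueDiffOn ℝ t)
    (hst : MapsTo (fun x : ℝ => x ^ 2) s t) (hf : ContDiffOn ℝ n f t) {k : ℕ} (hk : k < n)
    {x : ℝ} (hx : x ∈ s) :
    HasDerivWithinAt (fun y => iteratedDerivWithin k f t (y ^ 2))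
      (iteratedDerivWithin (k + 1) f t (x ^ 2) * (2 * x)) s x := by
  have houter : HasDerivWithinAt (iteratedDerivWithin k f t)
      (iteratedDerivWithin (k + 1) f t (x ^ 2)) t (x ^ 2) := by
    rw [iteratedDerivWithin_succ]
    exact (hf.differentiableOn_iteratedDerivWithin (mod_cast hk) ht _ (hst hx)).hasDerivWithinAt
  have hinner : HasDerivWithinAt (fun y : ℝ => y ^ 2) (2 * x) s x := by
    simpa using (hasDerivAt_pow 2 x).hasDerivWithinAt
  exact houter.comp (h := fun y : ℝ => y ^ 2) x hinner hst

theorem iteratedDerivWithin_comp_sq (hs : UniqueDiffOn ℝ s) (ht : UniqueDiffOn ℝ t)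
    (hst : MapsTo (fun x : ℝ => x ^ 2) s t) (hf : ContDiffOn ℝ n f t) :
    EqOn (iteratedDerivWithin n (fun x => f (x ^ 2)) s)
      (fun x => ∑ k ∈ range (n + 1), (sqSubstPoly n k).eval x * iteratedDerivWithin k f t (x ^ 2))
      s := by
  induction n with
  | zero => intro x _; simp [sqSubstPoly]
  | succ n ih =>
    intro x hx
    have hsum := HasDerivWithinAt.fun_sum (u := range (n + 1)) fun k hk =>
      ((sqSubstPoly n k).hasDerivAt x).hasDerivWithinAt.fun_mul
        (hasDerivWithinAt_iteratedDerivWithin_comp_sq ht hst hf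
          (by have := mem_range.mp hk; omega) hx)
    have hformula := ih (hf.of_le (mod_cast n.le_succ))
    rw [iteratedDerivWithin_succ, derivWithin_congr hformula (hformula hx),
      hsum.derivWithin (hs x hx)]
    exact (sum_range_succ_sqSubstPoly n x _).symm

end SquareSubstitution

lemma abs_sum_mul_le_sum_abs_mul {ι : Type*} (u : Finset ι) (a b : ι → ℝ) {B : ℝ}
    (hb : ∀ i ∈ u, |b i| ≤ B) : |∑ i ∈ u, a i * b i| ≤ (∑ i ∈ u, |a i|) * B := by
  rw [sum_mul]
  refine (abs_sum_le_sum_abs _ _).trans (sum_le_sum fun i hi => ?_)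
  rw [abs_mul]
  exact mul_le_mul_of_nonneg_left (hb i hi) (abs_nonneg _)

lemma abs_two_mul_pow_mul_le {r : ℕ} (hr : 2 ≤ r) {x D : ℝ} (hx0 : 0 < x) (hx1 : x ≤ 1)
    (hD : |D| ≤ 2 / x ^ 2) : |(2 * x) ^ r * D| ≤ 2 ^ (r + 1) := by
  obtain ⟨m, rfl⟩ := Nat.exists_eq_add_of_le hr
  calc |(2 * x) ^ (2 + m) * D| = (2 * x) ^ (2 + m) * |D| := by
        rw [abs_mul, abs_of_nonneg (by positivity)]
    _ ≤ (2 * x) ^ (2 + m) * (2 / x ^ 2) := by gcongr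
    _ = 2 ^ (2 + m + 1) * x ^ m := by field_simp; ring
    _ ≤ 2 ^ (2 + m + 1) * 1 := by gcongr; exact pow_le_one₀ hx0.le hx1
    _ = 2 ^ (2 + m + 1) := mul_one _

/-- Let `f : (0,1) → ℝ` be `r` times differentiable, `r ≥ 2`, with
`|f⁽ʲ⁾| ≤ 1` on `(0,1)` for `j < r` and `|f⁽ʳ⁾(x)| ≤ 2 / x`.  Then
`g(x) = f(x²)` satisfies `|g⁽ʳ⁾(x)| ≤ C(r) * (1 + B)` where `B` bounds all
derivatives of `f` of order `≤ r - 1`, and `C(r)` depends only on `r`. -/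
theorem deriv_bound_of_square_subst (r : ℕ) (hr : 2 ≤ r) :
    ∃ C : ℝ, 0 < C ∧
      ∀ (f : ℝ → ℝ) (B : ℝ),
        ContDiffOn ℝ r f (Ioo (0:ℝ) 1) →
        (∀ j ≤ r - 1, ∀ x ∈ Ioo (0:ℝ) 1,
          |iteratedDerivWithin j f (Ioo (0:ℝ) 1) x| ≤ B) →
        (∀ j < r, ∀ x ∈ Ioo (0:ℝ) 1,
          |iteratedDerivWithin j f (Ioo (0:ℝ) 1) x| ≤ 1) →
        (∀ x ∈ Ioo (0:ℝ) 1,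
          |iteratedDerivWithin r f (Ioo (0:ℝ) 1) x| ≤ 2 / x) →
        ∀ x ∈ Ioo (0:ℝ) 1,
          |iteratedDerivWithin r (fun x => f (x ^ 2)) (Ioo (0:ℝ) 1) x|
            ≤ C * (1 + B) := by
  obtain ⟨M, hM⟩ := (isCompact_Icc (a := (0 : ℝ)) (b := 1)).exists_bound_of_continuousOn
    (f := fun x => ∑ k ∈ range r, |(sqSubstPoly r k).eval x|) (by fun_prop)
  have hM0 : 0 ≤ M := (norm_nonneg _).trans (hM 0 (by simp))
  refine ⟨M + 2 ^ (r + 1), by positivity, fun f B hf hB _ htop x hx => ?_⟩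
  have hB0 : 0 ≤ B := (abs_nonneg _).trans (hB 0 (Nat.zero_le _) x hx)
  have hx2 : x ^ 2 ∈ Ioo (0:ℝ) 1 := mapsTo_sq_Ioo_zero_one hx
  have hlower : |∑ k ∈ range r, (sqSubstPoly r k).eval x *
      iteratedDerivWithin k f (Ioo 0 1) (x ^ 2)| ≤ M * B := by
    refine (abs_sum_mul_le_sum_abs_mul _ _ _ fun k hk => hB k ?_ _ hx2).trans ?_
    · have := mem_range.mp hk; omega
    · have := hM x (Ioo_subset_Icc_self hx)
      rw [Real.norm_of_nonneg (sum_nonneg fun _ _ => abs_nonneg _)] at this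
      gcongr
  have htop' : |(sqSubstPoly r r).eval x * iteratedDerivWithin r f (Ioo 0 1) (x ^ 2)| ≤
      2 ^ (r + 1) := by
    rw [sqSubstPoly_self, eval_pow, eval_mul, eval_C, eval_X]
    exact abs_two_mul_pow_mul_le hr hx.1 hx.2.le (htop _ hx2)
  rw [iteratedDerivWithin_comp_sq isOpen_Ioo.uniqueDiffOn isOpen_Ioo.uniqueDiffOn
    mapsTo_sq_Ioo_zero_one hf hx]
  beta_reduce
  rw [sum_range_succ]
  calc _ ≤ M * B + 2 ^ (r + 1) := (abs_add_le _ _).trans (add_le_add hlower htop')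
    _ ≤ (M + 2 ^ (r + 1)) * (1 + B) := by nlinarith [pow_pos (two_pos (α := ℝ)) (r + 1)]
end

section
/- Let ε ∈ (0, 1/4) and X_ε = {(x,y) ∈ (-1,1)² : xy = ε}. Suppose f : (0,1) → X_ε is a real-analytic map which extends holomorphically to the complex 1-neighborhood N₁(0,1) of (0,1) with both coordinates bounded by 2 in absolute value there. Then the image of the x-coordinate π∘f((0,1)) has hyperbolic diameter at most an absolute constant C (independent of ε) in the annulus A(ε/2, 2) = {ε/2 < |x| < 2}. -/
open Set UpperHalfPlane

/-- `p : ℍ → ℂ` is a holomorphic covering map onto the plane domain `S`: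
it takes values in `S`, is surjective onto `S`, holomorphic, and a covering
map onto `S`.  The Poincaré metric on `ℍ` then descends to `S`. -/
def IsHolomorphicCoveringOnto (p : UpperHalfPlane → ℂ) (S : Set ℂ) : Prop :=
  ∃ h : ∀ z, p z ∈ S,
    Function.Surjective (Set.codRestrict p S h) ∧
    (∃ P : ℂ → ℂ, DifferentiableOn ℂ P {z : ℂ | 0 < z.im} ∧
      ∀ z : UpperHalfPlane, P ↑z = p z) ∧
    IsCoveringMap (Set.codRestrict p S h)

/-- The hyperbolic distance on a domain covered by `p : ℍ → ℂ`: the infimum of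
hyperbolic distances between preimages.  (Here `ℍ` carries its Poincaré
metric.) -/
noncomputable def hypDist (p : UpperHalfPlane → ℂ) (x y : ℂ) : ℝ :=
  sInf {d | ∃ z w : UpperHalfPlane, p z = x ∧ p w = y ∧ d = dist z w}

/-- The annulus `{z : ℂ | a < |z| < b}`. -/
def Annulus (a b : ℝ) : Set ℂ := {z : ℂ | a < ‖z‖ ∧ ‖z‖ < b}

/-- The complex `1`-neighborhood of the interval `(0,1)`. -/
def NbhdOne : Set ℂ := {z : ℂ | ∃ t ∈ Set.Ioo (0:ℝ) 1, dist z (t : ℂ) < 1}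

/-! By analytic continuation `F₁ F₂ = ε` on all of `N₁(0,1)`, and since `|F₁|, |F₂| < 1` on the
real segment the maximum principle upgrades the bounds `|Fᵢ| ≤ 2` to `|Fᵢ| < 2`; hence `F₁` maps
`N₁(0,1)` into the annulus `A(ε/2, 2)`. On the unit disc about the midpoint `u` of `s` and `t`,
`F₁` lifts through the covering `p` to a map `H` into `ℍ`. The lift is holomorphic: away from the
critical points of `p` it is a local inverse of `p` composed with `F₁`, and the remaining points
are isolated, hence removable. Schwarz–Pick for `H` then bounds the hyperbolic distance between
`H s` and `H t`, both within `1/2` of `u`, by `4 artanh (1/2) = 2 log 3`. -/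

open Filter Metric Topology
open scoped ComplexConjugate

theorem Convex.isSimplyConnected {E : Type*} [AddCommGroup E] [Module ℝ E] [TopologicalSpace E]
    [ContinuousAdd E] [ContinuousSMul ℝ E] {s : Set E} (hs : Convex ℝ s) (hne : s.Nonempty) :
    IsSimplyConnected s :=
  haveI := hs.contractibleSpace hne
  SimplyConnectedSpace.ofContractible s

theorem IsCoveringMapOn.exists_continuousOn_lift {A E X : Type*} [TopologicalSpace A]
    [LocallyPathConnectedSpace A] [TopologicalSpace E] [TopologicalSpace X] {p : E → X}
    {S : Set X} (cov : IsCoveringMapOn p S) (hS : S ⊆ range p) {U : Set A}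
    (hUc : IsSimplyConnected U) (hUo : IsOpen U) {g : A → X} (hgc : ContinuousOn g U)
    (hgS : MapsTo g U S) :
    ∃ f : A → E, ContinuousOn f U ∧ EqOn (p ∘ f) g U := by
  classical
  have := hUc.simplyConnectedSpace
  have := hUo.locallyPathConnectedSpace
  obtain ⟨a₀, ha₀⟩ := hUc.nonempty
  obtain ⟨e₀, he₀⟩ := hS (hgS ha₀)
  lift a₀ to U using ha₀
  obtain ⟨f, ⟨-, hf⟩, -⟩ := cov.existsUnique_continuousMap_lifts
    ⟨U.domRestrict g, hgc.domRestrict⟩ he₀ (fun a ↦ hgS a.2)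
  refine ⟨fun a ↦ if ha : a ∈ U then f ⟨a, ha⟩ else e₀, ?_, fun a ha ↦ ?_⟩
  · rw [continuousOn_iff_continuous_domRestrict]
    convert f.continuous using 1
    ext ⟨a, ha⟩
    simp [ha]
  · simpa [ha] using congr_fun hf ⟨a, ha⟩

theorem eventuallyConst_of_eventually_deriv_eq_zero {𝕜 E : Type*} [RCLike 𝕜]
    [NormedAddCommGroup E] [NormedSpace 𝕜 E] {f : 𝕜 → E} {x : 𝕜}
    (hf : ∀ᶠ y in 𝓝 x, DifferentiableAt 𝕜 f y) (hf' : ∀ᶠ y in 𝓝 x, deriv f y = 0) :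
    EventuallyConst f (𝓝 x) := by
  obtain ⟨r, hr, hball⟩ := eventually_nhds_iff_ball.1 (hf.and hf')
  rw [eventuallyConst_iff_exists_eventuallyEq]
  refine ⟨f x, eventually_of_mem (ball_mem_nhds x hr) fun y hy ↦ ?_⟩
  exact isOpen_ball.is_const_of_deriv_eq_zero (convex_ball x r).isPreconnected
    (fun z hz ↦ (hball z hz).1.differentiableWithinAt) (fun z hz ↦ (hball z hz).2) hy
    (mem_ball_self hr)

theorem AnalyticAt.eventually_deriv_ne_zero {𝕜 E : Type*} [RCLike 𝕜] [NormedAddCommGroup E]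
    [NormedSpace 𝕜 E] [CompleteSpace E] {f : 𝕜 → E} {x : 𝕜} (hf : AnalyticAt 𝕜 f x)
    (hnc : ¬EventuallyConst f (𝓝 x)) : ∀ᶠ y in 𝓝[≠] x, deriv f y ≠ 0 :=
  hf.deriv.eventually_eq_zero_or_eventually_ne_zero.resolve_left fun h ↦
    hnc (eventuallyConst_of_eventually_deriv_eq_zero
      (hf.eventually_analyticAt.mono fun _ hy ↦ hy.differentiableAt) h)

theorem AnalyticOnNhd.not_eventuallyConst_of_ne {𝕜 E : Type*} [NontriviallyNormedField 𝕜]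
    [NormedAddCommGroup E] [NormedSpace 𝕜 E] [CompleteSpace E] {f : 𝕜 → E} {U : Set 𝕜}
    {x y z : 𝕜} (hf : AnalyticOnNhd 𝕜 f U) (hU : IsPreconnected U) (hx : x ∈ U) (hy : y ∈ U)
    (hxy : f x ≠ f y) (hz : z ∈ U) : ¬EventuallyConst f (𝓝 z) := fun hc ↦ by
  obtain ⟨c, hc⟩ := eventuallyConst_iff_exists_eventuallyEq.1 hc
  have hconst := hf.eqOn_of_preconnected_of_eventuallyEq analyticOnNhd_const hU hz hc
  exact hxy ((hconst hx).trans (hconst hy).symm)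

theorem differentiableOn_of_comp_eq_of_not_eventuallyConst {P G H : ℂ → ℂ} {U V : Set ℂ}
    (hU : IsOpen U) (hV : IsOpen V) (hP : DifferentiableOn ℂ P V) (hG : DifferentiableOn ℂ G U)
    (hH : ContinuousOn H U) (hHV : MapsTo H U V) (hPH : EqOn (P ∘ H) G U)
    (hGnc : ∀ z ∈ U, ¬EventuallyConst G (𝓝 z)) :
    DifferentiableOn ℂ H U := by
  have hPa : AnalyticOnNhd ℂ P V := hP.analyticOnNhd hV
  have hHc : ∀ z ∈ U, ContinuousAt H z := fun z hz ↦ hH.continuousAt (hU.mem_nhds hz)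
  have hcomp : ∀ z ∈ U, P ∘ H =ᶠ[𝓝 z] G := fun z hz ↦ eventually_of_mem (hU.mem_nhds hz) hPH
  have hregular : ∀ z ∈ U, deriv P (H z) ≠ 0 → DifferentiableAt ℂ H z := fun z hz hne ↦
    (HasDerivAt.of_comp_left (hHc z hz) (hPa _ (hHV hz)).differentiableAt.hasDerivAt
      (hG.differentiableAt (hU.mem_nhds hz)).hasDerivAt hne (hcomp z hz)).differentiableAt
  intro z hz
  have hPnc : ¬EventuallyConst P (𝓝 (H z)) := fun hc ↦
    hGnc z hz ((hc.comp_tendsto (hHc z hz)).congr (hcomp z hz))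
  -- `H w = H z` forces `G w = G z`, which the identity theorem excludes near `z`
  have hHne : Tendsto H (𝓝[≠] z) (𝓝[≠] (H z)) := by
    refine tendsto_nhdsWithin_of_tendsto_nhds_of_eventually_within _
      ((hHc z hz).mono_left nhdsWithin_le_nhds) ?_
    filter_upwards [((hG.analyticOnNhd hU) z hz).preimage_of_nhdsNE (hGnc z hz)
      self_mem_nhdsWithin, nhdsWithin_le_nhds (hU.mem_nhds hz)] with w hGw hw hHw
    exact hGw (show G w = G z by rw [← hPH hw, ← hPH hz]; exact congr_arg P hHw)
  have hpunct : ∀ᶠ w in 𝓝[≠] z, DifferentiableAt ℂ H w := by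
    filter_upwards [hHne.eventually ((hPa _ (hHV hz)).eventually_deriv_ne_zero hPnc),
      nhdsWithin_le_nhds (hU.mem_nhds hz)] with w hw hwU
    exact hregular w hwU hw
  exact (Complex.analyticAt_of_differentiable_on_punctured_nhds_of_continuousAt hpunct
    (hHc z hz)).differentiableAt.differentiableWithinAt

theorem Complex.tendsto_ofReal_nhdsNE (x : ℝ) :
    Tendsto ((↑) : ℝ → ℂ) (𝓝[≠] x) (𝓝[≠] (x : ℂ)) :=
  Complex.continuous_ofReal.continuousWithinAt.tendsto_nhdsWithin fun _ hy ↦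
    Complex.ofReal_injective.ne hy

theorem AnalyticOnNhd.eqOn_of_preconnected_of_eventuallyEq_ofReal {E : Type*}
    [NormedAddCommGroup E] [NormedSpace ℂ E] {f g : ℂ → E} {U : Set ℂ}
    (hf : AnalyticOnNhd ℂ f U) (hg : AnalyticOnNhd ℂ g U) (hU : IsPreconnected U) {x : ℝ}
    (hx : (x : ℂ) ∈ U) (hfg : ∀ᶠ y : ℝ in 𝓝 x, f y = g y) : EqOn f g U :=
  hf.eqOn_of_preconnected_of_frequently_eq hg hU hx
    ((Complex.tendsto_ofReal_nhdsNE x).frequently (hfg.filter_mono nhdsWithin_le_nhds).frequently)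

theorem Complex.norm_lt_of_isPreconnected_of_norm_lt {E : Type*} [NormedAddCommGroup E]
    [NormedSpace ℂ E] {f : ℂ → E} {U : Set ℂ} {M : ℝ} {z₀ z : ℂ} (hUc : IsPreconnected U)
    (hUo : IsOpen U) (hf : DifferentiableOn ℂ f U) (hM : ∀ w ∈ U, ‖f w‖ ≤ M) (hz₀ : z₀ ∈ U)
    (h₀ : ‖f z₀‖ < M) (hz : z ∈ U) : ‖f z‖ < M := by
  refine (hM z hz).lt_of_ne fun heq ↦ h₀.ne ?_
  have hmax : IsMaxOn (norm ∘ f) U z := fun w hw ↦ by simpa [heq] using hM w hw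
  simpa [heq] using Complex.norm_eqOn_of_isPreconnected_of_isMaxOn hUc hUo hf hz hmax hz₀

theorem Complex.norm_lt_of_im_eq_zero {w : ℂ} {r : ℝ} (him : w.im = 0)
    (hre : w.re ∈ Ioo (-r) r) : ‖w‖ < r := by
  rw [← Complex.abs_re_eq_norm.2 him]
  exact abs_lt.2 hre

theorem UpperHalfPlane.dist_le_two_mul_artanh_of_differentiableOn_ball {h : ℂ → ℍ} {c z : ℂ}
    {R : ℝ} (hd : DifferentiableOn ℂ (fun w ↦ (h w : ℂ)) (ball c R)) (hz : z ∈ ball c R) :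
    dist (h z) (h c) ≤ 2 * Real.artanh (dist z c / R) := by
  set a : ℂ := ↑(h c)
  -- the Cayley-type map `w ↦ (w - a) / (w - conj a)` sends `ℍ` to the unit disc and `a` to `0`
  set g : ℂ → ℂ := fun w ↦ ((h w : ℂ) - a) / ((h w : ℂ) - conj a)
  have hg : ∀ w, ‖g w‖ = Real.tanh (dist (h w) (h c) / 2) := fun w ↦ by
    rw [tanh_half_dist, Complex.dist_eq, Complex.dist_eq, norm_div]
  have hden : ∀ w, (h w : ℂ) - conj a ≠ 0 := fun w hw ↦ by
    have := congr_arg Complex.im hw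
    simp only [Complex.sub_im, Complex.conj_im, coe_im, Complex.zero_im, a] at this
    linarith [(h w).im_pos, (h c).im_pos]
  have hgd : DifferentiableOn ℂ g (ball c R) :=
    (hd.sub_const a).div (hd.sub_const _) fun w _ ↦ hden w
  have hgc : g c = 0 := by simp [g, a]
  have hmaps : MapsTo g (ball c R) (closedBall (g c) 1) := fun w _ ↦ by
    rw [hgc, mem_closedBall_zero_iff, hg]
    exact (Real.tanh_lt_one _).le
  have hschwarz := Complex.dist_le_div_mul_dist_of_mapsTo_ball hgd hmaps hz
  rw [hgc, dist_zero_right, hg, one_div_mul_eq_div] at hschwarz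
  have := Real.artanh_le_artanh (Real.neg_one_lt_tanh _)
    ((div_lt_one (pos_of_mem_ball hz)).2 (mem_ball.1 hz)) hschwarz
  rw [Real.artanh_tanh] at this
  linarith

theorem UpperHalfPlane.dist_le_four_mul_artanh_half {h : ℂ → ℍ} {c z w : ℂ} {R : ℝ}
    (hd : DifferentiableOn ℂ (fun w ↦ (h w : ℂ)) (ball c R)) (hR : 0 < R) (hz : dist z c ≤ R / 2)
    (hw : dist w c ≤ R / 2) : dist (h z) (h w) ≤ 4 * Real.artanh (1 / 2) := by
  have hhalf : ∀ v, dist v c ≤ R / 2 → dist (h v) (h c) ≤ 2 * Real.artanh (1 / 2) := fun v hv ↦ by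
    refine (dist_le_two_mul_artanh_of_differentiableOn_ball hd
      (mem_ball.2 (by linarith))).trans ?_
    gcongr
    exact Real.artanh_le_artanh (by linarith [div_nonneg (dist_nonneg (x := v) (y := c)) hR.le])
      (by norm_num) ((div_le_iff₀ hR).2 (by linarith))
  linarith [dist_triangle_right (h z) (h w) (h c), hhalf z hz, hhalf w hw]

theorem isOpen_annulus (a b : ℝ) : IsOpen (Annulus a b) :=
  (isOpen_lt continuous_const continuous_norm).inter (isOpen_lt continuous_norm continuous_const)

theorem mem_annulus_of_norm_mul_eq {a b : ℂ} {c R : ℝ} (ha : ‖a‖ < R) (hb : ‖b‖ < R)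
    (hab : ‖a * b‖ = c) (hc : 0 < c) : a ∈ Annulus (c / R) R := by
  have hR : 0 < R := (norm_nonneg b).trans_lt hb
  have ha₀ : 0 < ‖a‖ := norm_pos_iff.2 fun h ↦ by simp [h] at hab; linarith
  refine ⟨(div_lt_iff₀ hR).2 ?_, ha⟩
  rw [← hab, norm_mul]
  exact mul_lt_mul_of_pos_left hb ha₀

theorem mapsTo_annulus_of_norm_mul_eq {f g : ℂ → ℂ} {U : Set ℂ} {c R : ℝ} {z₀ : ℂ}
    (hUc : IsPreconnected U) (hUo : IsOpen U) (hf : DifferentiableOn ℂ f U)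
    (hg : DifferentiableOn ℂ g U) (hfR : ∀ z ∈ U, ‖f z‖ ≤ R) (hgR : ∀ z ∈ U, ‖g z‖ ≤ R)
    (hz₀ : z₀ ∈ U) (hf₀ : ‖f z₀‖ < R) (hg₀ : ‖g z₀‖ < R) (hfg : ∀ z ∈ U, ‖f z * g z‖ = c)
    (hc : 0 < c) : MapsTo f U (Annulus (c / R) R) := fun _ hz ↦
  mem_annulus_of_norm_mul_eq
    (Complex.norm_lt_of_isPreconnected_of_norm_lt hUc hUo hf hfR hz₀ hf₀ hz)
    (Complex.norm_lt_of_isPreconnected_of_norm_lt hUc hUo hg hgR hz₀ hg₀ hz) (hfg _ hz) hc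

theorem nbhdOne_eq_iUnion_ball : NbhdOne = ⋃ t : Ioo (0 : ℝ) 1, ball (t : ℂ) 1 := by
  ext z
  simp [NbhdOne, mem_ball]

theorem isOpen_nbhdOne : IsOpen NbhdOne :=
  nbhdOne_eq_iUnion_ball ▸ isOpen_iUnion fun _ ↦ isOpen_ball

theorem isPreconnected_nbhdOne : IsPreconnected NbhdOne := by
  rw [nbhdOne_eq_iUnion_ball]
  refine isPreconnected_iUnion ⟨(1 / 2 : ℝ), mem_iInter.2 fun t ↦ ?_⟩
    fun _ ↦ (convex_ball _ _).isPreconnected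
  rw [mem_ball, Complex.dist_eq, ← Complex.ofReal_sub, Complex.norm_real, Real.norm_eq_abs,
    abs_lt]
  constructor <;> linarith [t.2.1, t.2.2]

theorem ball_subset_nbhdOne {t : ℝ} (ht : t ∈ Ioo (0 : ℝ) 1) : ball (t : ℂ) 1 ⊆ NbhdOne :=
  fun _ hz ↦ ⟨t, ht, hz⟩

theorem ofReal_mem_nbhdOne {t : ℝ} (ht : t ∈ Ioo (0 : ℝ) 1) : (t : ℂ) ∈ NbhdOne :=
  ball_subset_nbhdOne ht (mem_ball_self one_pos)

theorem mapsTo_nbhdOne_annulus {F : ℂ → ℂ × ℂ} {ε s : ℝ} (hε : 0 < ε)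
    (hF : DifferentiableOn ℂ F NbhdOne) (hbd : ∀ z ∈ NbhdOne, ‖(F z).1‖ ≤ 2 ∧ ‖(F z).2‖ ≤ 2)
    (hs : s ∈ Ioo (0 : ℝ) 1) (hs₁ : ‖(F s).1‖ < 2) (hs₂ : ‖(F s).2‖ < 2)
    (hprod : ∀ t ∈ Ioo (0 : ℝ) 1, (F t).1 * (F t).2 = ε) :
    MapsTo (fun z ↦ (F z).1) NbhdOne (Annulus (ε / 2) 2) := by
  have hprod' : EqOn (fun z ↦ (F z).1 * (F z).2) (fun _ ↦ (ε : ℂ)) NbhdOne :=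
    ((hF.fst.analyticOnNhd isOpen_nbhdOne).mul (hF.snd.analyticOnNhd isOpen_nbhdOne))
      |>.eqOn_of_preconnected_of_eventuallyEq_ofReal analyticOnNhd_const isPreconnected_nbhdOne
        (ofReal_mem_nbhdOne hs) (eventually_of_mem (isOpen_Ioo.mem_nhds hs) hprod)
  refine mapsTo_annulus_of_norm_mul_eq isPreconnected_nbhdOne isOpen_nbhdOne hF.fst hF.snd
    (fun z hz ↦ (hbd z hz).1) (fun z hz ↦ (hbd z hz).2) (ofReal_mem_nbhdOne hs) hs₁ hs₂
    (fun z hz ↦ ?_) hε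
  rw [show (F z).1 * (F z).2 = ε from hprod' hz, Complex.norm_real, Real.norm_of_nonneg hε.le]

theorem hypDist_le {p : ℍ → ℂ} {x y : ℂ} {z w : ℍ} (hz : p z = x) (hw : p w = y) :
    hypDist p x y ≤ dist z w :=
  csInf_le ⟨0, by rintro _ ⟨_, _, _, _, rfl⟩; exact dist_nonneg⟩ ⟨z, w, hz, hw, rfl⟩

namespace IsHolomorphicCoveringOnto

variable {p : ℍ → ℂ} {S : Set ℂ}

theorem isCoveringMapOn (hp : IsHolomorphicCoveringOnto p S) (hS : IsOpen S) :
    IsCoveringMapOn p S :=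
  let ⟨h, _, _, hcov⟩ := hp
  .of_isCoveringMap_subtype hS h hcov

theorem subset_range (hp : IsHolomorphicCoveringOnto p S) : S ⊆ range p := fun x hx ↦
  let ⟨_, hsurj, _⟩ := hp
  let ⟨z, hz⟩ := hsurj ⟨x, hx⟩
  ⟨z, congr_arg Subtype.val hz⟩

theorem exists_differentiableOn_lift (hp : IsHolomorphicCoveringOnto p S) (hS : IsOpen S)
    {U : Set ℂ} (hUc : IsSimplyConnected U) (hUo : IsOpen U) {G : ℂ → ℂ}
    (hG : DifferentiableOn ℂ G U) (hGS : MapsTo G U S)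
    (hGnc : ∀ z ∈ U, ¬EventuallyConst G (𝓝 z)) :
    ∃ H : ℂ → ℍ, DifferentiableOn ℂ (fun z ↦ (H z : ℂ)) U ∧ EqOn (p ∘ H) G U := by
  obtain ⟨H, hHc, hpH⟩ := (hp.isCoveringMapOn hS).exists_continuousOn_lift hp.subset_range
    hUc hUo hG.continuousOn hGS
  obtain ⟨-, -, ⟨P, hP, hPp⟩, -⟩ := hp
  refine ⟨H, differentiableOn_of_comp_eq_of_not_eventuallyConst hUo
    (isOpen_lt continuous_const Complex.continuous_im) hP hG
    (continuous_coe.comp_continuousOn hHc) (fun z _ ↦ (H z).im_pos)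
    (fun z hz ↦ (hPp (H z)).trans (hpH hz)) hGnc, hpH⟩

end IsHolomorphicCoveringOnto

/-- If `f : (0,1) → X_ε = {xy = ε} ∩ (-1,1)²` extends holomorphically to the
complex `1`-neighborhood of `(0,1)` with both coordinates bounded by `2` there,
then the image of the `x`-coordinate has hyperbolic diameter in the annulus
`A(ε/2, 2)` at most an absolute constant independent of `ε`. -/
theorem omega_norm_image_bounded_diameter :
    ∃ C : ℝ, 0 < C ∧
      ∀ ε : ℝ, ε ∈ Set.Ioo (0:ℝ) (1/4) →
        ∀ p : UpperHalfPlane → ℂ,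
          IsHolomorphicCoveringOnto p (Annulus (ε / 2) 2) →
          ∀ F : ℂ → ℂ × ℂ,
            DifferentiableOn ℂ F NbhdOne →
            (∀ t : ℝ, t ∈ Set.Ioo (0:ℝ) 1 →
              ((F t).1.im = 0 ∧ (F t).2.im = 0 ∧
                (F t).1.re ∈ Set.Ioo (-1:ℝ) 1 ∧ (F t).2.re ∈ Set.Ioo (-1:ℝ) 1 ∧
                (F t).1 * (F t).2 = (ε : ℂ))) →
            (∀ z ∈ NbhdOne, ‖(F z).1‖ ≤ 2 ∧ ‖(F z).2‖ ≤ 2) →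
            ∀ s ∈ Set.Ioo (0:ℝ) 1, ∀ t ∈ Set.Ioo (0:ℝ) 1,
              hypDist p (F s).1 (F t).1 ≤ C := by
  have hC : 0 < Real.artanh (1 / 2) := Real.artanh_pos ⟨by norm_num, by norm_num⟩
  refine ⟨4 * Real.artanh (1 / 2), by positivity, ?_⟩
  intro ε hε p hp F hF hreal hbd s hs t ht
  obtain ⟨hs₁, hs₂, hs₁', hs₂', -⟩ := hreal s hs
  have hann := mapsTo_nbhdOne_annulus hε.1 hF hbd hs
    ((Complex.norm_lt_of_im_eq_zero hs₁ hs₁').trans one_lt_two)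
    ((Complex.norm_lt_of_im_eq_zero hs₂ hs₂').trans one_lt_two) fun t ht ↦ (hreal t ht).2.2.2.2
  by_cases hst : (F s).1 = (F t).1
  · obtain ⟨e, he⟩ := hp.subset_range (hann (ofReal_mem_nbhdOne hs))
    exact (hypDist_le he (he.trans hst)).trans (by rw [dist_self]; positivity)
  set u := (s + t) / 2 with hu_def
  have hu : u ∈ Ioo (0 : ℝ) 1 := ⟨by linarith [hs.1, ht.1], by linarith [hs.2, ht.2]⟩
  have hB := ball_subset_nbhdOne hu
  obtain ⟨H, hHd, hpH⟩ := hp.exists_differentiableOn_lift (isOpen_annulus _ _)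
    ((convex_ball _ _).isSimplyConnected ⟨_, mem_ball_self one_pos⟩) isOpen_ball (hF.fst.mono hB)
    (hann.mono_left hB) fun z hz ↦ (hF.fst.analyticOnNhd isOpen_nbhdOne).not_eventuallyConst_of_ne
      isPreconnected_nbhdOne (ofReal_mem_nbhdOne hs) (ofReal_mem_nbhdOne ht) hst (hB hz)
  obtain ⟨hsu, htu⟩ : dist (s : ℂ) u ≤ 1 / 2 ∧ dist (t : ℂ) u ≤ 1 / 2 := by
    simp only [Complex.isometry_ofReal.dist_eq, Real.dist_eq, abs_le]
    refine ⟨⟨?_, ?_⟩, ?_, ?_⟩ <;> linarith [hs.1, hs.2, ht.1, ht.2, hu_def]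
  exact (hypDist_le (hpH (mem_ball.2 (by linarith))) (hpH (mem_ball.2 (by linarith)))).trans
    (UpperHalfPlane.dist_le_four_mul_artanh_half hHd one_pos (by linarith) (by linarith))
end

section
/- Let F : ℝ^ℓ → ℝ be C^r and φ : ℝ → ℝ be C^r with ‖φ‖_{C^r} ≤ 1, and suppose every partial derivative D^β F with β strictly smaller than a multi-index α (in degree-lexicographic order, with α₁ ≥ 1 and |α| ≤ r) is bounded by 1. Define G(x) = F(φ(x₁), x₂, …, x_ℓ). Then D^β G is bounded by a constant C(ℓ,r) for every β < α, and D^α G equals (φ')^{α₁}·(D^α F)(φ(x₁), x₂,…,x_ℓ) plus a term bounded by C(ℓ,r). -/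
open Set

/-- The partial derivative in direction `i`. -/
noncomputable def partialDeriv {ℓ : ℕ} (i : Fin ℓ) (F : (Fin ℓ → ℝ) → ℝ) :
    (Fin ℓ → ℝ) → ℝ :=
  fun x => fderiv ℝ F x (Pi.single i 1)

/-- The iterated partial derivative `D^β F` associated with a multi-index `β`. -/
noncomputable def multiDeriv {ℓ : ℕ} (β : Fin ℓ → ℕ) (F : (Fin ℓ → ℝ) → ℝ) :
    (Fin ℓ → ℝ) → ℝ :=
  (List.finRange ℓ).foldr (fun i G => (partialDeriv i)^[β i] G) F

/-- Degree-lexicographic order on multi-indices. -/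
def DegLexLT {ℓ : ℕ} (β α : Fin ℓ → ℕ) : Prop :=
  (∑ i, β i) < (∑ i, α i) ∨
    ((∑ i, β i) = (∑ i, α i) ∧ ∃ i, (∀ j, j < i → β j = α j) ∧ β i < α i)

/-!
Derivatives in the directions `1, …, ℓ` commute with `reparam 0 φ`, which moves only the 0-th
coordinate, so `D^β (F ∘ reparam 0 φ) = ∂₀^{β₀} (H ∘ reparam 0 φ)` with `H = D^{(0, β₁, …, β_ℓ)} F`.
Along the 0-th coordinate this is the one-variable Faà di Bruno formula for `h ∘ φ`, where `h` is
`H` restricted to the line through `x` in direction 0: a sum over ordered partitions `c` of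
`{1, …, β₀}` of `h^{(#c)} ∘ φ` times a product of derivatives of `φ`.
Only the partition into singletons has `β₀` parts; it contributes `(φ')^{β₀} · h^{(β₀)} ∘ φ`. Every
other term involves `∂₀^m H = D^{(m, β₁, …, β_ℓ)} F` with `m < β₀`, a derivative of smaller degree
and hence bounded by `1`, times a product of derivatives of `φ` bounded by `(r!)^r`.
-/

open Function

namespace OrderedFinpartition

lemma partSize_eq_one_of_length_eq {n : ℕ} {c : OrderedFinpartition n} (h : c.length = n)
    (m : Fin c.length) : c.partSize m = 1 := by
  have hsum : ∑ m, c.partSize m ≤ ∑ _m : Fin c.length, 1 := by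
    simpa [h] using Fintype.card_le_of_injective _ c.emb_injective
  exact ((Finset.sum_eq_sum_iff_of_le fun m _ => c.partSize_pos m).1
    (le_antisymm (Finset.sum_le_sum fun m _ => c.partSize_pos m) hsum) m (Finset.mem_univ _)).symm

lemma eq_atomic_of_length_eq {n : ℕ} {c : OrderedFinpartition n} (h : c.length = n) :
    c = atomic n := by
  have hsize := partSize_eq_one_of_length_eq h
  obtain ⟨L, P, hP, emb, hemb, hmono, hdisj, hcover⟩ := c
  dsimp only at h hsize
  subst h
  obtain rfl : P = fun _ => 1 := funext hsize
  obtain rfl : emb = fun m _ => m := by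
    funext m i
    rw [Subsingleton.elim i 0]
    exact congrFun hmono.eq_id m
  rfl

lemma abs_prod_iteratedDeriv_partSize_le {n : ℕ} (c : OrderedFinpartition n) {φ : ℝ → ℝ}
    {t B : ℝ} (hB : 1 ≤ B) (hφ : ∀ j ≤ n, |iteratedDeriv j φ t| ≤ B) :
    |∏ m, iteratedDeriv (c.partSize m) φ t| ≤ B ^ n :=
  calc |∏ m, iteratedDeriv (c.partSize m) φ t|
      = ∏ m, |iteratedDeriv (c.partSize m) φ t| := Finset.abs_prod _ _
    _ ≤ ∏ _m : Fin c.length, B :=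
      Finset.prod_le_prod (fun _ _ => abs_nonneg _) fun m _ => hφ _ (c.partSize_le m)
    _ = B ^ c.length := by rw [Finset.prod_const, Finset.card_univ, Fintype.card_fin]
    _ ≤ B ^ n := pow_le_pow_right₀ hB c.length_le

end OrderedFinpartition

open OrderedFinpartition in
theorem abs_iteratedDeriv_comp_sub_le {g φ : ℝ → ℝ} {k : ℕ} {t B : ℝ}
    (hg : ContDiffAt ℝ k g (φ t)) (hφ : ContDiffAt ℝ k φ t) (hB : 1 ≤ B)
    (hφB : ∀ j ≤ k, |iteratedDeriv j φ t| ≤ B)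
    (hgB : ∀ m < k, |iteratedDeriv m g (φ t)| ≤ 1) :
    |iteratedDeriv k (g ∘ φ) t - iteratedDeriv k g (φ t) * deriv φ t ^ k|
      ≤ Fintype.card (OrderedFinpartition k) * B ^ k := by
  rw [iteratedDeriv_comp_eq_sum_orderedFinpartition hg hφ le_rfl,
    ← Finset.add_sum_erase _ _ (Finset.mem_univ (atomic k))]
  have htop : iteratedDeriv (atomic k).length g (φ t) *
      ∏ m, iteratedDeriv ((atomic k).partSize m) φ t = iteratedDeriv k g (φ t) * deriv φ t ^ k := by
    simp [iteratedDeriv_one]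
  rw [htop, add_sub_cancel_left]
  calc _ ≤ ∑ c ∈ Finset.univ.erase (atomic k),
        |iteratedDeriv c.length g (φ t) * ∏ m, iteratedDeriv (c.partSize m) φ t| :=
        Finset.abs_sum_le_sum_abs _ _
    _ ≤ ∑ c ∈ Finset.univ.erase (atomic k), B ^ k := by
      refine Finset.sum_le_sum fun c hc => ?_
      have hlt : c.length < k :=
        c.length_le.lt_of_ne fun h => (Finset.ne_of_mem_erase hc) (eq_atomic_of_length_eq h)
      rw [abs_mul, ← one_mul (B ^ k)]
      exact mul_le_mul (hgB _ hlt) (c.abs_prod_iteratedDeriv_partSize_le hB hφB)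
        (abs_nonneg _) zero_le_one
    _ ≤ Fintype.card (OrderedFinpartition k) * B ^ k := by
      rw [Finset.sum_const, nsmul_eq_mul]
      gcongr
      exact_mod_cast (Finset.card_erase_le).trans (Finset.card_univ).le

lemma abs_deriv_pow_le {φ : ℝ → ℝ} {k : ℕ} {t B : ℝ}
    (hφB : ∀ j ≤ k, |iteratedDeriv j φ t| ≤ B) : |deriv φ t ^ k| ≤ B ^ k := by
  cases k with
  | zero => simp
  | succ k =>
    rw [abs_pow]
    exact pow_le_pow_left₀ (abs_nonneg _) (by simpa using hφB 1 (by omega)) _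


variable {n : ℕ}

def reparam (i : Fin n) (φ : ℝ → ℝ) (y : Fin n → ℝ) : Fin n → ℝ :=
  update y i (φ (y i))

lemma reparam_update_self (i : Fin n) (φ : ℝ → ℝ) (y : Fin n → ℝ) (t : ℝ) :
    reparam i φ (update y i t) = update y i (φ t) := by
  simp [reparam]

lemma reparam_update_of_ne {i j : Fin n} (hji : j ≠ i) (φ : ℝ → ℝ) (y : Fin n → ℝ) (t : ℝ) :
    reparam i φ (update y j t) = update (reparam i φ y) j t := by
  simp [reparam, update_of_ne hji.symm, update_comm hji]

lemma contDiff_reparam {m : ℕ} (i : Fin n) {φ : ℝ → ℝ} (hφ : ContDiff ℝ m φ) :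
    ContDiff ℝ m (reparam i φ) := by
  refine contDiff_pi.2 fun j => ?_
  by_cases hj : j = i
  · subst hj
    simpa [reparam, Function.comp_def] using hφ.comp (contDiff_apply ℝ ℝ j)
  · simpa [reparam, update_of_ne hj] using contDiff_apply ℝ ℝ j

lemma partialDeriv_eq_deriv_update (i : Fin n) {G : (Fin n → ℝ) → ℝ} {y : Fin n → ℝ}
    (hG : DifferentiableAt ℝ G y) :
    partialDeriv i G y = deriv (fun t => G (update y i t)) (y i) := by
  have hG' : HasFDerivAt G (fderiv ℝ G y) (update y i (y i)) := by
    simpa using hG.hasFDerivAt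
  exact (hG'.comp_hasDerivAt _ (hasDerivAt_update y i (y i))).deriv.symm

lemma contDiff_partialDeriv {m : ℕ} (i : Fin n) {G : (Fin n → ℝ) → ℝ}
    (hG : ContDiff ℝ (m + 1 : ℕ) G) : ContDiff ℝ m (partialDeriv i G) :=
  (hG.fderiv_right (by simp)).clm_apply contDiff_const

lemma contDiff_iterate_partialDeriv {m k : ℕ} (i : Fin n) {G : (Fin n → ℝ) → ℝ}
    (hG : ContDiff ℝ (m + k : ℕ) G) : ContDiff ℝ m ((partialDeriv i)^[k] G) := by
  induction k generalizing G with
  | zero => simpa using hG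
  | succ k ih => exact ih (contDiff_partialDeriv i (by rwa [← add_assoc] at hG))

lemma iterate_partialDeriv_eq_iteratedDeriv {k : ℕ} (i : Fin n) {G : (Fin n → ℝ) → ℝ}
    (hG : ContDiff ℝ k G) (y : Fin n → ℝ) :
    (partialDeriv i)^[k] G y = iteratedDeriv k (fun t => G (update y i t)) (y i) := by
  induction k generalizing G with
  | zero => simp
  | succ k ih =>
    rw [iterate_succ_apply, ih (contDiff_partialDeriv i hG), iteratedDeriv_succ']
    congr 1
    funext t
    rw [partialDeriv_eq_deriv_update i (hG.differentiable (by simp) _)]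
    simp

lemma partialDeriv_comp_reparam_of_ne {i j : Fin n} (hji : j ≠ i) {G : (Fin n → ℝ) → ℝ}
    {φ : ℝ → ℝ} (hG : Differentiable ℝ G) (hφ : ContDiff ℝ 1 φ) :
    partialDeriv j (G ∘ reparam i φ) = partialDeriv j G ∘ reparam i φ := by
  funext y
  have hcomp : Differentiable ℝ (G ∘ reparam i φ) :=
    hG.comp ((contDiff_reparam i hφ).differentiable one_ne_zero)
  rw [partialDeriv_eq_deriv_update j (hcomp y), comp_apply,
    partialDeriv_eq_deriv_update j (hG _)]
  simp only [comp_apply, reparam_update_of_ne hji]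
  rw [reparam, update_of_ne hji]

lemma iterate_partialDeriv_comp_reparam_of_ne {i j : Fin n} (hji : j ≠ i) {k : ℕ}
    {G : (Fin n → ℝ) → ℝ} {φ : ℝ → ℝ} (hG : ContDiff ℝ k G) (hφ : ContDiff ℝ k φ) :
    (partialDeriv j)^[k] (G ∘ reparam i φ) = (partialDeriv j)^[k] G ∘ reparam i φ := by
  induction k with
  | zero => rfl
  | succ k ih =>
    have hGk : ContDiff ℝ (1 + k : ℕ) G := by rwa [add_comm]
    rw [iterate_succ_apply', iterate_succ_apply',
      ih (hG.of_le (by norm_cast; omega)) (hφ.of_le (by norm_cast; omega)),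
      partialDeriv_comp_reparam_of_ne hji
        ((contDiff_iterate_partialDeriv j hGk).differentiable one_ne_zero)
        (hφ.of_le (by norm_cast; omega))]

section foldr

variable (L : List (Fin n)) (γ : Fin n → ℕ)

lemma contDiff_foldr_iterate_partialDeriv {m : ℕ} {G : (Fin n → ℝ) → ℝ}
    (hG : ContDiff ℝ (m + (L.map γ).sum : ℕ) G) :
    ContDiff ℝ m (L.foldr (fun j H => (partialDeriv j)^[γ j] H) G) := by
  induction L generalizing m with
  | nil => simpa using hG
  | cons j L ih =>
    refine contDiff_iterate_partialDeriv j (ih ?_)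
    simpa [add_assoc, add_comm (γ j)] using hG

lemma foldr_iterate_partialDeriv_comp_reparam {i : Fin n} (hγ : γ i = 0)
    {G : (Fin n → ℝ) → ℝ} {φ : ℝ → ℝ} (hG : ContDiff ℝ (L.map γ).sum G)
    (hφ : ContDiff ℝ (L.map γ).sum φ) :
    L.foldr (fun j H => (partialDeriv j)^[γ j] H) (G ∘ reparam i φ)
      = L.foldr (fun j H => (partialDeriv j)^[γ j] H) G ∘ reparam i φ := by
  induction L with
  | nil => rfl
  | cons j L ih =>
    rw [List.foldr_cons, List.foldr_cons, ih (hG.of_le (by simp)) (hφ.of_le (by simp))]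
    by_cases hji : j = i
    · subst hji
      rw [hγ]
      rfl
    · refine iterate_partialDeriv_comp_reparam_of_ne hji
        (contDiff_foldr_iterate_partialDeriv L γ ?_) (hφ.of_le (by simp))
      simpa [add_comm] using hG

end foldr

lemma contDiff_multiDeriv {m : ℕ} (β : Fin n → ℕ) {F : (Fin n → ℝ) → ℝ}
    (hF : ContDiff ℝ (m + ∑ i, β i : ℕ) F) : ContDiff ℝ m (multiDeriv β F) :=
  contDiff_foldr_iterate_partialDeriv _ β (by rwa [← Fin.sum_univ_def])

lemma multiDeriv_comp_reparam {i : Fin n} {β : Fin n → ℕ} (hβ : β i = 0)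
    {F : (Fin n → ℝ) → ℝ} {φ : ℝ → ℝ} (hF : ContDiff ℝ (∑ i, β i : ℕ) F)
    (hφ : ContDiff ℝ (∑ i, β i : ℕ) φ) :
    multiDeriv β (F ∘ reparam i φ) = multiDeriv β F ∘ reparam i φ :=
  foldr_iterate_partialDeriv_comp_reparam _ β hβ (by rwa [← Fin.sum_univ_def])
    (by rwa [← Fin.sum_univ_def])

lemma multiDeriv_eq_iterate_partialDeriv_zero {ℓ : ℕ} (β : Fin (ℓ + 1) → ℕ)
    (F : (Fin (ℓ + 1) → ℝ) → ℝ) :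
    multiDeriv β F = (partialDeriv 0)^[β 0] (multiDeriv (update β 0 0) F) := by
  simp only [multiDeriv, List.finRange_succ, List.foldr_cons, List.foldr_map, update_self,
    iterate_zero, id, ne_eq, Fin.succ_ne_zero, not_false_eq_true, update_of_ne]

theorem abs_iterate_partialDeriv_comp_reparam_sub_le {k : ℕ} (i : Fin n)
    {H : (Fin n → ℝ) → ℝ} {φ : ℝ → ℝ} {B : ℝ} (hH : ContDiff ℝ k H) (hφ : ContDiff ℝ k φ)
    (hB : 1 ≤ B) (y : Fin n → ℝ) (hφB : ∀ j ≤ k, |iteratedDeriv j φ (y i)| ≤ B)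
    (hHB : ∀ m < k, |(partialDeriv i)^[m] H (reparam i φ y)| ≤ 1) :
    |(partialDeriv i)^[k] (H ∘ reparam i φ) y
        - (partialDeriv i)^[k] H (reparam i φ y) * deriv φ (y i) ^ k|
      ≤ Fintype.card (OrderedFinpartition k) * B ^ k := by
  set g : ℝ → ℝ := fun s => H (update y i s)
  have hg : ContDiff ℝ k g := hH.comp (contDiff_update k y i)
  have hH_eq : ∀ m ≤ k,
      (partialDeriv i)^[m] H (reparam i φ y) = iteratedDeriv m g (φ (y i)) := by
    intro m hm
    rw [iterate_partialDeriv_eq_iteratedDeriv i (hH.of_le (by exact_mod_cast hm))]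
    simp [g, reparam]
  have hcomp_eq : (partialDeriv i)^[k] (H ∘ reparam i φ) y = iteratedDeriv k (g ∘ φ) (y i) := by
    rw [iterate_partialDeriv_eq_iteratedDeriv i (hH.comp (contDiff_reparam i hφ))]
    simp only [comp_apply, reparam_update_self]
    rfl
  rw [hcomp_eq, hH_eq k le_rfl]
  exact abs_iteratedDeriv_comp_sub_le hg.contDiffAt hφ.contDiffAt hB hφB
    fun m hm => hH_eq m hm.le ▸ hHB m hm

lemma sum_update_add_self {ι M : Type*} [Fintype ι] [DecidableEq ι] [AddCommMonoid M]
    (β : ι → M) (i : ι) (m : M) : ∑ j, update β i m j + β i = ∑ j, β j + m := by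
  rw [Finset.sum_update_of_mem (Finset.mem_univ i),
    Finset.sum_eq_add_sum_sdiff_singleton_of_mem (Finset.mem_univ i)]
  abel

lemma DegLexLT.sum_le {β α : Fin n → ℕ} (h : DegLexLT β α) : ∑ i, β i ≤ ∑ i, α i := by
  rcases h with h | ⟨h, -⟩ <;> omega

lemma degLexLT_update_of_lt {β α : Fin n → ℕ} {i : Fin n} {m : ℕ}
    (hβα : ∑ i, β i ≤ ∑ i, α i) (hm : m < β i) : DegLexLT (update β i m) α :=
  Or.inl (by have := sum_update_add_self β i m; omega)

section multiIndex

variable {ℓ : ℕ} {β : Fin (ℓ + 1) → ℕ} {F : (Fin (ℓ + 1) → ℝ) → ℝ} {φ : ℝ → ℝ} {B : ℝ}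

theorem abs_multiDeriv_comp_reparam_sub_le (hF : ContDiff ℝ (∑ i, β i : ℕ) F)
    (hφ : ContDiff ℝ (∑ i, β i : ℕ) φ) (hB : 1 ≤ B) (x : Fin (ℓ + 1) → ℝ)
    (hφB : ∀ j ≤ β 0, |iteratedDeriv j φ (x 0)| ≤ B)
    (hFB : ∀ m < β 0, |multiDeriv (update β 0 m) F (reparam 0 φ x)| ≤ 1) :
    |multiDeriv β (F ∘ reparam 0 φ) x - deriv φ (x 0) ^ β 0 * multiDeriv β F (reparam 0 φ x)|
      ≤ Fintype.card (OrderedFinpartition (β 0)) * B ^ β 0 := by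
  set H := multiDeriv (update β 0 0) F
  have hsum := sum_update_add_self β 0 0
  have hβ0 : β 0 ≤ ∑ i, β i := Finset.single_le_sum_of_canonicallyOrdered (Finset.mem_univ 0)
  have hH : ContDiff ℝ (β 0) H := contDiff_multiDeriv _ (hF.of_le (by norm_cast; omega))
  have hH_iter : ∀ m, (partialDeriv 0)^[m] H = multiDeriv (update β 0 m) F := fun m => by
    rw [multiDeriv_eq_iterate_partialDeriv_zero (update β 0 m), update_self, update_idem]
  have hcomp : multiDeriv β (F ∘ reparam 0 φ) = (partialDeriv 0)^[β 0] (H ∘ reparam 0 φ) := by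
    rw [multiDeriv_eq_iterate_partialDeriv_zero,
      multiDeriv_comp_reparam (update_self _ _ _) (hF.of_le (by norm_cast; omega))
        (hφ.of_le (by norm_cast; omega))]
  rw [hcomp, ← update_eq_self 0 β, ← hH_iter, update_eq_self, mul_comm]
  exact abs_iterate_partialDeriv_comp_reparam_sub_le 0 hH (hφ.of_le (by exact_mod_cast hβ0)) hB
    x hφB fun m hm => hH_iter m ▸ hFB m hm

theorem abs_multiDeriv_comp_reparam_le (hF : ContDiff ℝ (∑ i, β i : ℕ) F)
    (hφ : ContDiff ℝ (∑ i, β i : ℕ) φ) (hB : 1 ≤ B) (x : Fin (ℓ + 1) → ℝ)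
    (hφB : ∀ j ≤ β 0, |iteratedDeriv j φ (x 0)| ≤ B)
    (hFB : ∀ m ≤ β 0, |multiDeriv (update β 0 m) F (reparam 0 φ x)| ≤ 1) :
    |multiDeriv β (F ∘ reparam 0 φ) x|
      ≤ (Fintype.card (OrderedFinpartition (β 0)) + 1) * B ^ β 0 := by
  have htop : |deriv φ (x 0) ^ β 0 * multiDeriv β F (reparam 0 φ x)| ≤ B ^ β 0 := by
    rw [abs_mul, ← mul_one (B ^ β 0)]
    exact mul_le_mul (abs_deriv_pow_le hφB) (by simpa using hFB (β 0) le_rfl) (abs_nonneg _)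
      (by positivity)
  have herr := abs_multiDeriv_comp_reparam_sub_le hF hφ hB x hφB fun m hm => hFB m hm.le
  linarith [abs_sub_abs_le_abs_sub (multiDeriv β (F ∘ reparam 0 φ) x)
    (deriv φ (x 0) ^ β 0 * multiDeriv β F (reparam 0 φ x))]

end multiIndex

noncomputable def reparametrizeConst (r : ℕ) : ℝ :=
  (r.factorial : ℝ) ^ r * ∑ k ∈ Finset.range (r + 1), (Fintype.card (OrderedFinpartition k) + 1 : ℝ)

lemma le_reparametrizeConst {k r : ℕ} (hk : k ≤ r) :
    (Fintype.card (OrderedFinpartition k) + 1) * (r.factorial : ℝ) ^ k ≤ reparametrizeConst r := by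
  have hB : (1 : ℝ) ≤ r.factorial := by exact_mod_cast r.factorial_pos
  calc _ ≤ (Fintype.card (OrderedFinpartition k) + 1) * (r.factorial : ℝ) ^ r := by gcongr
    _ ≤ _ := by
      rw [reparametrizeConst, mul_comm]
      gcongr
      exact Finset.single_le_sum (f := fun k => (Fintype.card (OrderedFinpartition k) + 1 : ℝ))
        (fun _ _ => by positivity) (Finset.mem_range_succ_iff.2 hk)

lemma reparametrizeConst_pos (r : ℕ) : 0 < reparametrizeConst r :=
  (by positivity : (0 : ℝ) < (_ + 1) * _ ^ 0).trans_le (le_reparametrizeConst r.zero_le)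

/-- Reparametrizing the first variable by `φ` with `‖φ‖_{C^r} ≤ 1` keeps all
derivatives `D^β G`, `β <deglex α`, bounded, and `D^α G` equals
`(φ')^{α₁}·(D^α F)∘(φ, id)` up to a bounded term. -/
theorem reparametrize_first_variable (ℓ r : ℕ) :
    ∃ C : ℝ, 0 < C ∧
      ∀ (α : Fin (ℓ + 1) → ℕ), 1 ≤ α 0 → (∑ i, α i) ≤ r →
        ∀ (F : (Fin (ℓ + 1) → ℝ) → ℝ) (φ : ℝ → ℝ),
          ContDiff ℝ (r : ℕ∞) F → ContDiff ℝ (r : ℕ∞) φ →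
          (∀ j ≤ r, ∀ t : ℝ, |iteratedDeriv j φ t| ≤ (Nat.factorial j : ℝ)) →
          (∀ β : Fin (ℓ + 1) → ℕ, DegLexLT β α →
            ∀ x, |multiDeriv β F x| ≤ 1) →
          ((∀ β : Fin (ℓ + 1) → ℕ, DegLexLT β α →
              ∀ x, |multiDeriv β
                (fun y => F (Function.update y 0 (φ (y 0)))) x| ≤ C) ∧
            ∀ x, |multiDeriv α (fun y => F (Function.update y 0 (φ (y 0)))) x
              - (deriv φ (x 0)) ^ (α 0)
                * multiDeriv α F (Function.update x 0 (φ (x 0)))| ≤ C) := by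
  refine ⟨reparametrizeConst r, reparametrizeConst_pos r, fun α _ hαr F φ hF hφ hφ_le hF_le => ?_⟩
  have hB : (1 : ℝ) ≤ r.factorial := by exact_mod_cast r.factorial_pos
  have hφB : ∀ j ≤ r, ∀ t, |iteratedDeriv j φ t| ≤ r.factorial := fun j hj t =>
    (hφ_le j hj t).trans (by exact_mod_cast Nat.factorial_le hj)
  refine ⟨fun β hβ x => ?_, fun x => ?_⟩
  · have hβr : ∑ i, β i ≤ r := hβ.sum_le.trans hαr
    have hβ0 : β 0 ≤ r :=
      (Finset.single_le_sum_of_canonicallyOrdered (Finset.mem_univ 0)).trans hβr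
    refine (abs_multiDeriv_comp_reparam_le (hF.of_le (by exact_mod_cast hβr))
      (hφ.of_le (by exact_mod_cast hβr)) hB x (fun j hj => hφB j (hj.trans hβ0) _)
      fun m hm => hF_le _ ?_ _).trans (le_reparametrizeConst hβ0)
    rcases hm.lt_or_eq with hm | rfl
    · exact degLexLT_update_of_lt hβ.sum_le hm
    · rwa [update_eq_self]
  · have hα0 : α 0 ≤ r :=
      (Finset.single_le_sum_of_canonicallyOrdered (Finset.mem_univ 0)).trans hαr
    refine (abs_multiDeriv_comp_reparam_sub_le (hF.of_le (by exact_mod_cast hαr))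
      (hφ.of_le (by exact_mod_cast hαr)) hB x (fun j hj => hφB j (hj.trans hα0) _)
      fun m hm => hF_le _ (degLexLT_update_of_lt le_rfl hm) _).trans ?_
    exact le_trans (by gcongr; linarith) (le_reparametrizeConst hα0)
end
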